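/- arXiv:2107.01433 — 2 statements merged into one kernel-verified Lean document; each statement's English description precedes it below -/
import Mathlib

section
/- Every critical point of the problem (P) is a generalised critical point of (P) for every sufficiently large value of the penalty parameter c > 0; conversely, every feasible point of (P) that is a generalised critical point of (P) for some c > 0 is critical for (P). -/
open RealInnerProductSpace Finset Filter Topology

noncomputable section

/-- Euclidean space `ℝ^d`. -/
abbrev Euc (d : ℕ) := EuclideanSpace ℝ (Fin d)

/-- The (convex-analysis) subdifferential of `f` at `y`. -/
def subdiff {d : ℕ} (f : Euc d → ℝ) (y : Euc d) : Set (Euc d) :=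
  {v | ∀ x, f y + ⟪v, x - y⟫ ≤ f x}

/-- The normal cone to `A` at `x`. -/
def normalCone {d : ℕ} (A : Set (Euc d)) (x : Euc d) : Set (Euc d) :=
  {v | ∀ y ∈ A, ⟪v, y - x⟫ ≤ 0}

/-- A subgradient tuple `V = (v₀, vᵢ (i ∈ I), vⱼ, wⱼ (j ∈ E))` at the point `y`:
`v_k ∈ ∂h_k(y)` for `k ∈ {0} ∪ I ∪ E` and `w_j ∈ ∂g_j(y)` for `j ∈ E`. -/
structure SubgradTuple {d l p : ℕ} (h0 : Euc d → ℝ) (hI : Fin l → Euc d → ℝ)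
    (gE hE : Fin p → Euc d → ℝ) (y : Euc d) : Type where
  v0 : Euc d
  vI : Fin l → Euc d
  vE : Fin p → Euc d
  wE : Fin p → Euc d
  v0_mem : v0 ∈ subdiff h0 y
  vI_mem : ∀ i, vI i ∈ subdiff (hI i) y
  vE_mem : ∀ j, vE j ∈ subdiff (hE j) y
  wE_mem : ∀ j, wE j ∈ subdiff (gE j) y

variable {d l p : ℕ}

/-- The linearised infeasibility measure `Γ(x, y, V)`. -/
def Gam (gI : Fin l → Euc d → ℝ) {h0 : Euc d → ℝ} {hI : Fin l → Euc d → ℝ}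
    {gE hE : Fin p → Euc d → ℝ} {y : Euc d}
    (V : SubgradTuple h0 hI gE hE y) (x : Euc d) : ℝ :=
  (∑ i, max (gI i x - hI i y - ⟪V.vI i, x - y⟫) 0)
  + ∑ j, max (gE j x - hE j y - ⟪V.vE j, x - y⟫)
      (hE j x - gE j y - ⟪V.wE j, x - y⟫)

/-- The convex majorant `Q_c(x, y, V)` of the penalty function. -/
def Qfun (g0 : Euc d → ℝ) (gI : Fin l → Euc d → ℝ) {h0 : Euc d → ℝ}
    {hI : Fin l → Euc d → ℝ} {gE hE : Fin p → Euc d → ℝ} {y : Euc d}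
    (V : SubgradTuple h0 hI gE hE y) (c : ℝ) (x : Euc d) : ℝ :=
  g0 x - ⟪V.v0, x - y⟫ + c * Gam gI V x

/-- The ℓ1 penalty term `φ`. -/
def phi (gI hI : Fin l → Euc d → ℝ) (gE hE : Fin p → Euc d → ℝ) (x : Euc d) : ℝ :=
  (∑ i, max (gI i x - hI i x) 0) + ∑ j, |gE j x - hE j x|

/-- The ℓ1 penalty function `Φ_c = f₀ + c φ`. -/
def Phi (g0 h0 : Euc d → ℝ) (gI hI : Fin l → Euc d → ℝ) (gE hE : Fin p → Euc d → ℝ)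
    (c : ℝ) (x : Euc d) : ℝ :=
  (g0 x - h0 x) + c * phi gI hI gE hE x

/-- Feasibility for the problem (P). -/
def Feasible (A : Set (Euc d)) (gI hI : Fin l → Euc d → ℝ)
    (gE hE : Fin p → Euc d → ℝ) (x : Euc d) : Prop :=
  x ∈ A ∧ (∀ i, gI i x - hI i x ≤ 0) ∧ (∀ j, gE j x - hE j x = 0)

/-- Criticality for the problem (P) (Definition 1). -/
def IsCritical (A : Set (Euc d)) (g0 h0 : Euc d → ℝ) (gI hI : Fin l → Euc d → ℝ)
    (gE hE : Fin p → Euc d → ℝ) (x : Euc d) : Prop :=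
  ∃ V : SubgradTuple h0 hI gE hE x, ∃ lam : Fin l → ℝ, ∃ mu1 mu2 : Fin p → ℝ,
    (∀ i, 0 ≤ lam i) ∧ (∀ j, 0 ≤ mu1 j) ∧ (∀ j, 0 ≤ mu2 j) ∧
    (∀ i, lam i * (gI i x - hI i x) = 0) ∧
    ∃ u0 ∈ subdiff g0 x, ∃ uI : Fin l → Euc d, (∀ i, uI i ∈ subdiff (gI i) x) ∧
    ∃ uE : Fin p → Euc d, (∀ j, uE j ∈ subdiff (gE j) x) ∧
    ∃ zE : Fin p → Euc d, (∀ j, zE j ∈ subdiff (hE j) x) ∧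
    ∃ ν ∈ normalCone A x,
      (0 : Euc d) = (u0 - V.v0) + (∑ i, lam i • (uI i - V.vI i))
        + (∑ j, mu1 j • (uE j - V.vE j)) - (∑ j, mu2 j • (V.wE j - zE j)) + ν

/-- Generalised criticality for the penalty parameter `c`. -/
def IsGenCritical (A : Set (Euc d)) (g0 h0 : Euc d → ℝ) (gI hI : Fin l → Euc d → ℝ)
    (gE hE : Fin p → Euc d → ℝ) (c : ℝ) (x : Euc d) : Prop :=
  x ∈ A ∧ ∃ V : SubgradTuple h0 hI gE hE x, ∀ z ∈ A, Qfun g0 gI V c x ≤ Qfun g0 gI V c z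

/-- Criticality for the penalty term `φ`. -/
def IsCriticalPen (A : Set (Euc d)) (h0 : Euc d → ℝ) (gI hI : Fin l → Euc d → ℝ)
    (gE hE : Fin p → Euc d → ℝ) (x : Euc d) : Prop :=
  x ∈ A ∧ ∃ V : SubgradTuple h0 hI gE hE x, ∀ z ∈ A, Gam gI V x ≤ Gam gI V z

/-- `F` is coercive on `A`. -/
def CoerciveOn {d : ℕ} (F : Euc d → ℝ) (A : Set (Euc d)) : Prop :=
  ∀ u : ℕ → Euc d, (∀ n, u n ∈ A) → Tendsto (fun n => ‖u n‖) atTop atTop →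
    Tendsto (fun n => F (u n)) atTop atTop


lemma convexOn_continuous {f : Euc d → ℝ} (hf : ConvexOn ℝ Set.univ f) : Continuous f := by
  exact continuousOn_univ.mp (hf.continuousOn isOpen_univ)

/-- Master separation lemma. -/
lemma master {f : Euc d → ℝ} (hf : ConvexOn ℝ Set.univ f) {x : Euc d} (hfx : f x = 0)
    {C : Set (Euc d × ℝ)} (hC : Convex ℝ C) (hxC : (x, (0:ℝ)) ∈ C)
    (hdisj : ∀ q ∈ C, q.2 ≤ f q.1) :
    ∃ v : Euc d, (∀ y, ⟪v, y - x⟫ ≤ f y) ∧ (∀ q ∈ C, q.2 ≤ ⟪v, q.1 - x⟫) := by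
  have hcont : Continuous f := convexOn_continuous hf
  set U : Set (Euc d × ℝ) := {q | f q.1 < q.2} with hU
  have hUconv : Convex ℝ U := by
    have := hf.convex_strict_epigraph
    simpa using this
  have hUopen : IsOpen U := isOpen_lt (hcont.comp continuous_fst) continuous_snd
  have hdisjoint : Disjoint U C := by
    rw [Set.disjoint_left]
    intro q hq hqC
    exact absurd (hdisj q hqC) (not_le.2 hq)
  obtain ⟨φ, β, hφU, hφC⟩ := geometric_hahn_banach_open hUconv hUopen hC hdisjoint
  set α : ℝ := φ (0, 1) with hα
  set w : Euc d := (InnerProductSpace.toDual ℝ (Euc d)).symm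
      (φ.comp (ContinuousLinearMap.inl ℝ (Euc d) ℝ)) with hw
  have hwy : ∀ y : Euc d, ⟪w, y⟫ = φ (y, 0) := by
    intro y
    rw [hw, InnerProductSpace.toDual_symm_apply]
    rfl
  have hsplit : ∀ (y : Euc d) (t : ℝ), φ (y, t) = ⟪w, y⟫ + t * α := by
    intro y t
    have : (y, t) = (y, (0:ℝ)) + t • ((0:Euc d), (1:ℝ)) := by
      simp [Prod.ext_iff]
    rw [this, map_add, map_smul, hwy]
    simp [hα, smul_eq_mul]
  -- α < 0
  have hx1U : ((x, (1:ℝ)) : Euc d × ℝ) ∈ U := by simp [hU, hfx]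
  have hαneg : α < 0 := by
    have h1 := hφU _ hx1U
    have h2 := hφC _ hxC
    rw [hsplit x 1] at h1
    rw [hsplit x 0] at h2
    linarith
  -- β = ⟪w, x⟫
  have hβ1 : β ≤ ⟪w, x⟫ := by
    have h2 := hφC _ hxC
    rw [hsplit] at h2; linarith
  have hnegpos : (0:ℝ) < -α := by linarith
  have hUlim : ∀ y : Euc d, ⟪w, y⟫ + f y * α ≤ β := by
    intro y
    by_contra hcon
    push_neg at hcon
    set ε : ℝ := (⟪w, y⟫ + f y * α - β) / (-α) with hεdef
    have hεpos : (0:ℝ) < ε := div_pos (by linarith) hnegpos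
    have hεα : ε * (-α) = ⟪w, y⟫ + f y * α - β :=
      div_mul_cancel₀ _ (ne_of_gt hnegpos)
    have hmem : ((y, f y + ε) : Euc d × ℝ) ∈ U := by
      simp only [hU, Set.mem_setOf_eq]; linarith
    have hlt := hφU _ hmem
    rw [hsplit y (f y + ε)] at hlt
    have hexp : (f y + ε) * α = f y * α + ε * α := by ring
    have hεα' : ε * α = -(⟪w, y⟫ + f y * α - β) := by linarith [hεα]
    linarith
  have hβ2 : ⟪w, x⟫ ≤ β := by have := hUlim x; rw [hfx] at this; linarith
  have hβ : β = ⟪w, x⟫ := le_antisymm hβ1 hβ2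
  refine ⟨(-α)⁻¹ • w, ?_, ?_⟩
  · intro y
    have h := hUlim y
    rw [hβ] at h
    rw [real_inner_smul_left, inner_sub_right, inv_mul_eq_div,
      div_le_iff₀ hnegpos]
    linarith
  · intro q hq
    have h := hφC _ hq
    rw [hsplit, hβ] at h
    rw [real_inner_smul_left, inner_sub_right, inv_mul_eq_div,
      le_div_iff₀ hnegpos]
    linarith

lemma convexOn_inner_add (a : Euc d) (r : ℝ) :
    ConvexOn ℝ Set.univ (fun y : Euc d => ⟪a, y⟫ + r) := by
  refine ⟨convex_univ, fun y _ z _ s t hs ht hst => le_of_eq ?_⟩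
  show ⟪a, s • y + t • z⟫ + r = s • (⟪a, y⟫ + r) + t • (⟪a, z⟫ + r)
  rw [inner_add_right, real_inner_smul_right, real_inner_smul_right,
    smul_eq_mul, smul_eq_mul]
  linear_combination r * hst.symm

lemma shifted_convex {f : Euc d → ℝ} (hf : ConvexOn ℝ Set.univ f) (u x : Euc d) (r : ℝ) :
    ConvexOn ℝ Set.univ (fun y => f y - ⟪u, y - x⟫ - r) := by
  have h2 := convexOn_inner_add (-u) (⟪u, x⟫ - r)
  have h3 := hf.add h2
  convert h3 using 2 with y
  show f y - ⟪u, y - x⟫ - r = f y + (⟪-u, y⟫ + (⟪u, x⟫ - r))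
  rw [inner_sub_right, inner_neg_left]
  ring
  rfl

lemma subdiff_shift {f : Euc d → ℝ} {u x v : Euc d} {r : ℝ} :
    v ∈ subdiff (fun y => f y - ⟪u, y - x⟫ - r) x ↔ v + u ∈ subdiff f x := by
  constructor
  · intro h y
    have hy := h y
    simp only [sub_self, inner_zero_right] at hy
    rw [inner_add_left]
    linarith
  · intro h y
    have hy := h y
    rw [inner_add_left] at hy
    simp only [sub_self, inner_zero_right]
    linarith

lemma subdiff_nonempty {f : Euc d → ℝ} (hf : ConvexOn ℝ Set.univ f) (x : Euc d) :
    (subdiff f x).Nonempty := by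
  have hsh : ConvexOn ℝ Set.univ (fun y => f y - ⟪(0:Euc d), y - x⟫ - f x) :=
    shifted_convex hf 0 x (f x)
  obtain ⟨v, hv1, _⟩ := master hsh (by simp)
    (convex_singleton ((x, (0:ℝ)) : Euc d × ℝ)) rfl
    (by rintro q rfl; simp)
  refine ⟨v, fun y => ?_⟩
  have := hv1 y
  simp only [inner_zero_left, sub_zero] at this
  linarith

/-- Minimiser over a convex set gives a subgradient whose negative is in the normal cone. -/
lemma exists_subdiff_neg_normalCone {F : Euc d → ℝ} (hF : ConvexOn ℝ Set.univ F)
    {A : Set (Euc d)} (hA : Convex ℝ A) {x : Euc d} (hxA : x ∈ A)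
    (hmin : ∀ y ∈ A, F x ≤ F y) :
    ∃ v ∈ subdiff F x, -v ∈ normalCone A x := by
  have hsh : ConvexOn ℝ Set.univ (fun y => F y - ⟪(0:Euc d), y - x⟫ - F x) :=
    shifted_convex hF 0 x (F x)
  obtain ⟨v, hv1, hv2⟩ := master hsh (by simp) (hA.prod (convex_Iic (0:ℝ)))
    (Set.mk_mem_prod hxA Set.self_mem_Iic)
    (by rintro ⟨y, t⟩ ⟨hy, ht⟩
        simp only [inner_zero_left, sub_zero]
        have := hmin y hy
        simp only [Set.mem_Iic] at ht
        linarith)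
  refine ⟨v, fun y => ?_, fun y hy => ?_⟩
  · have := hv1 y
    simp only [inner_zero_left, sub_zero] at this
    linarith
  · have := hv2 (y, 0) (Set.mk_mem_prod hy Set.self_mem_Iic)
    simp only at this
    rw [inner_neg_left]
    linarith

lemma subdiff_add {f g : Euc d → ℝ} (hf : ConvexOn ℝ Set.univ f)
    (hg : ConvexOn ℝ Set.univ g) {x u : Euc d}
    (hu : u ∈ subdiff (fun y => f y + g y) x) :
    ∃ v ∈ subdiff f x, ∃ w ∈ subdiff g x, u = v + w := by
  have hsh : ConvexOn ℝ Set.univ (fun y => f y - ⟪u, y - x⟫ - f x) :=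
    shifted_convex hf u x (f x)
  set C : Set (Euc d × ℝ) := {q | q.2 ≤ g x - g q.1} with hC
  have hCconv : Convex ℝ C := by
    rintro ⟨y1, t1⟩ h1 ⟨y2, t2⟩ h2 s t hs ht hst
    simp only [hC, Set.mem_setOf_eq] at h1 h2 ⊢
    have hmix := hg.2 (Set.mem_univ y1) (Set.mem_univ y2) hs ht hst
    simp only [smul_eq_mul] at hmix ⊢
    show s * t1 + t * t2 ≤ g x - g (s • y1 + t • y2)
    have hgx : s * g x + t * g x = g x := by rw [← add_mul, hst, one_mul]
    nlinarith [mul_le_mul_of_nonneg_left h1 hs, mul_le_mul_of_nonneg_left h2 ht]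
  obtain ⟨v, hv1, hv2⟩ := master (x := x) hsh (by simp) hCconv
    (by simp [hC])
    (by rintro ⟨y, t⟩ hyt
        simp only [hC, Set.mem_setOf_eq] at hyt
        have := hu y
        dsimp only at this
        show t ≤ f y - ⟪u, y - x⟫ - f x
        linarith)
  refine ⟨u + v, fun y => ?_, -v, fun y => ?_, by abel⟩
  · have := hv1 y
    rw [inner_add_left]
    linarith
  · have := hv2 (y, g x - g y) (by simp [hC])
    simp only at this
    rw [inner_neg_left]
    linarith

lemma subdiff_zero {x v : Euc d} (hv : v ∈ subdiff (fun _ => (0:ℝ)) x) : v = 0 := by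
  have := hv (x + v)
  simp only [add_sub_cancel_left, zero_add] at this
  have h2 : ⟪v, v⟫ ≤ 0 := by linarith
  have := real_inner_self_nonneg (x := v)
  exact inner_self_eq_zero.mp (le_antisymm h2 this) 

lemma subdiff_smul {f : Euc d → ℝ} {c : ℝ} (hc : 0 < c) {x u : Euc d}
    (hu : u ∈ subdiff (fun y => c * f y) x) : c⁻¹ • u ∈ subdiff f x := by
  intro y
  have h1 := hu y
  dsimp only at h1
  rw [real_inner_smul_left]
  have h3 : c * (f x + c⁻¹ * ⟪u, y - x⟫) ≤ c * f y := by
    rw [mul_add, mul_inv_cancel_left₀ (ne_of_gt hc)]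
    exact h1
  exact le_of_mul_le_mul_left h3 hc

lemma convexOn_sum {n : ℕ} {F : Fin n → Euc d → ℝ} (hF : ∀ i, ConvexOn ℝ Set.univ (F i)) :
    ConvexOn ℝ Set.univ (fun z => ∑ i, F i z) := by
  induction n with
  | zero => simpa using convexOn_const 0 convex_univ
  | succ n ih =>
    have := (hF 0).add (ih (fun i => hF i.succ))
    convert this using 2 with z
    rfl
    rw [Fin.sum_univ_succ]
    rfl

lemma subdiff_sum {n : ℕ} {F : Fin n → Euc d → ℝ} (hF : ∀ i, ConvexOn ℝ Set.univ (F i))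
    {x u : Euc d} (hu : u ∈ subdiff (fun z => ∑ i, F i z) x) :
    ∃ s : Fin n → Euc d, (∀ i, s i ∈ subdiff (F i) x) ∧ u = ∑ i, s i := by
  induction n generalizing u with
  | zero =>
    refine ⟨fun i => 0, fun i => i.elim0, ?_⟩
    simp only [Finset.univ_eq_empty, Finset.sum_empty]
    exact subdiff_zero (by simpa using hu)
  | succ n ih =>
    have hu' : u ∈ subdiff (fun z => F 0 z + ∑ i : Fin n, F i.succ z) x := by
      intro y
      have := hu y
      simpa only [Fin.sum_univ_succ] using this
    obtain ⟨v, hv, w, hw, hvw⟩ := subdiff_add (hF 0)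
      (convexOn_sum (fun i => hF i.succ)) hu'
    obtain ⟨s, hs, hsum⟩ := ih (fun i => hF i.succ) hw
    refine ⟨Fin.cases v s, fun i => ?_, ?_⟩
    · refine Fin.cases ?_ ?_ i
      · exact hv
      · exact hs
    · rw [Fin.sum_univ_succ]
      simp only [Fin.cases_zero, Fin.cases_succ]
      rw [hvw, hsum]

/-- 2-D separation step for the max rule (the case of equal values). -/
lemma twoD {f g : Euc d → ℝ} (hf : ConvexOn ℝ Set.univ f) (hg : ConvexOn ℝ Set.univ g)
    {x u : Euc d} (hfx : f x = 0) (hgx : g x = 0)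
    (hu : ∀ y, ⟪u, y - x⟫ ≤ max (f y) (g y)) :
    ∃ θ ∈ Set.Icc (0:ℝ) 1, ∀ y, ⟪u, y - x⟫ ≤ θ * f y + (1 - θ) * g y := by
  set C : Set (ℝ × ℝ) := {q | ∃ y, f y - ⟪u, y - x⟫ ≤ q.1 ∧ g y - ⟪u, y - x⟫ ≤ q.2} with hC
  have hCconv : Convex ℝ C := by
    rintro ⟨a1, b1⟩ ⟨y1, hy1, hy1'⟩ ⟨a2, b2⟩ ⟨y2, hy2, hy2'⟩ s t hs ht hst
    refine ⟨s • y1 + t • y2, ?_, ?_⟩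
    · have h1 := (shifted_convex hf u x 0).2 (Set.mem_univ y1) (Set.mem_univ y2) hs ht hst
      simp only [sub_zero, smul_eq_mul] at h1
      show f (s • y1 + t • y2) - ⟪u, (s • y1 + t • y2) - x⟫ ≤ s * a1 + t * a2
      nlinarith [mul_le_mul_of_nonneg_left hy1 hs, mul_le_mul_of_nonneg_left hy2 ht]
    · have h1 := (shifted_convex hg u x 0).2 (Set.mem_univ y1) (Set.mem_univ y2) hs ht hst
      simp only [sub_zero, smul_eq_mul] at h1
      show g (s • y1 + t • y2) - ⟪u, (s • y1 + t • y2) - x⟫ ≤ s * b1 + t * b2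
      nlinarith [mul_le_mul_of_nonneg_left hy1' hs, mul_le_mul_of_nonneg_left hy2' ht]
  set U : Set (ℝ × ℝ) := Set.Iio (0:ℝ) ×ˢ Set.Iio (0:ℝ) with hUdef
  have hUconv : Convex ℝ U := (convex_Iio 0).prod (convex_Iio 0)
  have hUopen : IsOpen U := (isOpen_Iio).prod (isOpen_Iio)
  have hdisj : Disjoint U C := by
    rw [Set.disjoint_left]
    rintro ⟨a, b⟩ ⟨ha, hb⟩ ⟨y, hy1, hy2⟩
    simp only [Set.mem_Iio] at ha hb
    have := hu y
    rcases max_cases (f y) (g y) with ⟨hm, _⟩ | ⟨hm, _⟩ <;> rw [hm] at this <;> linarith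
  obtain ⟨φ, β, hφU, hφC⟩ := geometric_hahn_banach_open hUconv hUopen hCconv hdisj
  set θ1 : ℝ := φ (1, 0) with hθ1
  set θ2 : ℝ := φ (0, 1) with hθ2
  have hsplit : ∀ a b : ℝ, φ (a, b) = a * θ1 + b * θ2 := by
    intro a b
    have : ((a, b) : ℝ × ℝ) = a • ((1:ℝ), (0:ℝ)) + b • ((0:ℝ), (1:ℝ)) := by
      simp [Prod.ext_iff]
    rw [this, map_add, map_smul, map_smul, smul_eq_mul, smul_eq_mul]
  have hmemC0 : ((0:ℝ), (0:ℝ)) ∈ C := ⟨x, by simp [hfx], by simp [hgx]⟩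
  have hβ0 : β ≤ 0 := by
    have := hφC _ hmemC0
    rw [hsplit] at this; linarith
  have hUval : ∀ a b : ℝ, a < 0 → b < 0 → a * θ1 + b * θ2 < β := by
    intro a b ha hb
    have := hφU (a, b) (by exact ⟨ha, hb⟩)
    rwa [hsplit] at this
  have hθ1pos : 0 ≤ θ1 := by
    by_contra hcon
    push_neg at hcon
    rcases le_or_gt (β + θ2 + 1) 0 with hcase | hcase
    · have := hUval (-1) (-1) (by norm_num) (by norm_num)
      nlinarith
    · have ht : (0:ℝ) < (β + θ2 + 1) / (-θ1) := div_pos hcase (by linarith)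
      have := hUval (-((β + θ2 + 1) / (-θ1))) (-1) (by linarith) (by norm_num)
      have hmul : ((β + θ2 + 1) / (-θ1)) * (-θ1) = β + θ2 + 1 :=
        div_mul_cancel₀ _ (by linarith)
      nlinarith
  have hθ2pos : 0 ≤ θ2 := by
    by_contra hcon
    push_neg at hcon
    rcases le_or_gt (β + θ1 + 1) 0 with hcase | hcase
    · have := hUval (-1) (-1) (by norm_num) (by norm_num)
      nlinarith
    · have ht : (0:ℝ) < (β + θ1 + 1) / (-θ2) := div_pos hcase (by linarith)
      have := hUval (-1) (-((β + θ1 + 1) / (-θ2))) (by norm_num) (by linarith)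
      have hmul : ((β + θ1 + 1) / (-θ2)) * (-θ2) = β + θ1 + 1 :=
        div_mul_cancel₀ _ (by linarith)
      nlinarith
  have hθsum : 0 < θ1 + θ2 := by
    rcases lt_or_eq_of_le (by linarith : (0:ℝ) ≤ θ1 + θ2) with h | h
    · exact h
    · exfalso
      have hz1 : θ1 = 0 := by linarith
      have hz2 : θ2 = 0 := by linarith
      have := hUval (-1) (-1) (by norm_num) (by norm_num)
      rw [hz1, hz2] at this
      simp at this
      linarith
  have hβ0' : 0 ≤ β := by
    by_contra hcon
    push_neg at hcon
    have hε : (0:ℝ) < (-β) / (θ1 + θ2) := div_pos (by linarith) hθsum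
    have := hUval (-((-β) / (θ1 + θ2))) (-((-β) / (θ1 + θ2))) (by linarith) (by linarith)
    have hmul : ((-β) / (θ1 + θ2)) * (θ1 + θ2) = -β := div_mul_cancel₀ _ (ne_of_gt hθsum)
    nlinarith
  refine ⟨θ1 / (θ1 + θ2), ⟨div_nonneg hθ1pos (le_of_lt hθsum),
    (div_le_one hθsum).mpr (by linarith)⟩, fun y => ?_⟩
  have hmemC : ((f y - ⟪u, y - x⟫, g y - ⟪u, y - x⟫) : ℝ × ℝ) ∈ C :=
    ⟨y, le_refl _, le_refl _⟩
  have hval := hφC _ hmemC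
  rw [hsplit] at hval
  have h1θ : 1 - θ1 / (θ1 + θ2) = θ2 / (θ1 + θ2) := by
    field_simp
    ring
  rw [h1θ]
  have hcomb : θ1 / (θ1 + θ2) * f y + θ2 / (θ1 + θ2) * g y
      = (θ1 * f y + θ2 * g y) / (θ1 + θ2) := by ring
  rw [hcomb, le_div_iff₀ hθsum]
  nlinarith [hval]

lemma split_scaled {f : Euc d → ℝ} (hf : ConvexOn ℝ Set.univ f) {θ : ℝ} (hθ0 : 0 ≤ θ)
    {x v1 : Euc d} (hv1 : v1 ∈ subdiff (fun y => θ * f y) x) :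
    ∃ v ∈ subdiff f x, v1 = θ • v := by
  rcases eq_or_lt_of_le hθ0 with h | h
  · obtain ⟨v, hv⟩ := subdiff_nonempty hf x
    refine ⟨v, hv, ?_⟩
    have hz : v1 ∈ subdiff (fun _ => (0:ℝ)) x := by
      intro y
      have := hv1 y
      simpa [← h] using this
    rw [subdiff_zero hz, ← h, zero_smul]
  · refine ⟨θ⁻¹ • v1, subdiff_smul h hv1, ?_⟩
    rw [smul_inv_smul₀ (ne_of_gt h)]

lemma subdiff_max {f g : Euc d → ℝ} (hf : ConvexOn ℝ Set.univ f) (hg : ConvexOn ℝ Set.univ g)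
    {x u : Euc d} (hfx : f x ≤ 0) (hgx : g x = 0)
    (hu : u ∈ subdiff (fun y => max (f y) (g y)) x) :
    ∃ θ ∈ Set.Icc (0:ℝ) 1, ∃ v ∈ subdiff f x, ∃ w ∈ subdiff g x,
      u = θ • v + (1 - θ) • w ∧ θ * f x = 0 := by
  have hmx : max (f x) (g x) = 0 := by rw [hgx]; exact max_eq_right hfx
  have hu' : ∀ y, ⟪u, y - x⟫ ≤ max (f y) (g y) := by
    intro y
    have := hu y
    dsimp only at this
    rw [hmx] at this
    linarith
  rcases eq_or_lt_of_le hfx with hfx0 | hfxneg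
  · -- f x = 0 : 2-D separation
    obtain ⟨θ, hθmem, hθy⟩ := twoD hf hg hfx0 hgx hu'
    obtain ⟨hθ0, hθ1⟩ := hθmem
    have hconv1 : ConvexOn ℝ Set.univ (fun y => θ * f y) := hf.smul hθ0
    have hconv2 : ConvexOn ℝ Set.univ (fun y => (1 - θ) * g y) :=
      hg.smul (by linarith : (0:ℝ) ≤ 1 - θ)
    have husub : u ∈ subdiff (fun y => θ * f y + (1 - θ) * g y) x := by
      intro y
      have := hθy y
      dsimp only
      rw [hfx0, hgx]
      simpa using this
    obtain ⟨v1, hv1, w1, hw1, huvw⟩ := subdiff_add hconv1 hconv2 husub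
    obtain ⟨v, hv, hveq⟩ := split_scaled hf hθ0 hv1
    obtain ⟨w, hw, hweq⟩ := split_scaled hg (by linarith : (0:ℝ) ≤ 1 - θ) hw1
    exact ⟨θ, ⟨hθ0, hθ1⟩, v, hv, w, hw, by rw [huvw, hveq, hweq], by rw [hfx0, mul_zero]⟩
  · -- f x < 0 : u is a subgradient of g
    have hgsub : ∀ y, ⟪u, y - x⟫ ≤ g y := by
      intro y
      by_contra hcon
      push_neg at hcon
      set D : ℝ := ⟪u, y - x⟫ with hD
      set K : ℝ := f y - D with hK
      set t : ℝ := if K ≤ 0 then 1/2 else min (1/2) ((-f x)/(3*K)) with ht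
      have htpos : 0 < t := by
        rw [ht]; split_ifs with h
        · norm_num
        · push_neg at h
          exact lt_min (by norm_num) (div_pos (by linarith) (by linarith))
      have htle : t ≤ 1/2 := by
        rw [ht]; split_ifs with h
        · exact le_refl _
        · exact min_le_left _ _
      set z : Euc d := (1 - t) • x + t • y with hz
      have hzx : z - x = t • (y - x) := by
        rw [hz, sub_smul, one_smul, smul_sub]; abel
      have hfz : f z ≤ (1 - t) * f x + t * f y := by
        have := hf.2 (Set.mem_univ x) (Set.mem_univ y)
          (by linarith : (0:ℝ) ≤ 1 - t) (le_of_lt htpos) (by ring)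
        simpa [smul_eq_mul] using this
      have hgz : g z ≤ (1 - t) * g x + t * g y := by
        have := hg.2 (Set.mem_univ x) (Set.mem_univ y)
          (by linarith : (0:ℝ) ≤ 1 - t) (le_of_lt htpos) (by ring)
        simpa [smul_eq_mul] using this
      have hinner : ⟪u, z - x⟫ = t * D := by
        rw [hzx, real_inner_smul_right, hD]
      have hKey : (1 - t) * f x + t * K < 0 := by
        rw [ht]; split_ifs with h
        · nlinarith
        · push_neg at h
          have hA : min (1/2) ((-f x)/(3*K)) ≤ (-f x)/(3*K) := min_le_right _ _
          have hB : min (1/2) ((-f x)/(3*K)) ≤ 1/2 := min_le_left _ _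
          have hC0 : min (1/2) ((-f x)/(3*K)) * K ≤ -f x/3 := by
            have h3 : ((-f x)/(3*K)) * K = -f x/3 := by
              field_simp
            calc min (1/2) ((-f x)/(3*K)) * K ≤ ((-f x)/(3*K)) * K :=
                  mul_le_mul_of_nonneg_right hA (le_of_lt h)
              _ = -f x/3 := h3
          have hD0 : (1 - min (1/2) ((-f x)/(3*K))) * f x ≤ (1/2) * f x :=
            mul_le_mul_of_nonpos_right (by linarith) (le_of_lt hfxneg)
          linarith
      have hty : t * f y = t * K + t * D := by rw [hK]; ring
      have h1 : f z < t * D := by linarith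
      have h2 : g z < t * D := by
        have hm := mul_lt_mul_of_pos_left hcon htpos
        rw [hgx] at hgz
        linarith
      have hfin := hu' z
      rw [hinner] at hfin
      have := max_lt h1 h2
      linarith
    have : u ∈ subdiff g x := by
      intro y
      rw [hgx]
      simpa using hgsub y
    obtain ⟨v, hv⟩ := subdiff_nonempty hf x
    exact ⟨0, ⟨le_refl 0, by norm_num⟩, v, hv, u, this,
      by simp, by rw [zero_mul]⟩

lemma shifted_convex2 {d : ℕ} {f : Euc d → ℝ} (hf : ConvexOn ℝ Set.univ f) (u x : Euc d) (r : ℝ) :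
    ConvexOn ℝ Set.univ (fun y => f y - r - ⟪u, y - x⟫) := by
  have := shifted_convex hf u x r
  convert this using 2 with y
  ring

lemma subdiff_shift2 {d : ℕ} {f : Euc d → ℝ} {u x v : Euc d} {r : ℝ}
    (h : v ∈ subdiff (fun y => f y - r - ⟪u, y - x⟫) x) : v + u ∈ subdiff f x := by
  intro y
  have hy := h y
  simp only [sub_self, inner_zero_right] at hy
  rw [inner_add_left]
  linarith



theorem stmt2 {d l p : ℕ} (A : Set (Euc d)) (g0 h0 : Euc d → ℝ)
    (gI hI : Fin l → Euc d → ℝ) (gE hE : Fin p → Euc d → ℝ)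
    (hA : Convex ℝ A) (hAcl : IsClosed A) (hAne : A.Nonempty)
    (hg0 : ConvexOn ℝ Set.univ g0) (hh0 : ConvexOn ℝ Set.univ h0)
    (hgI : ∀ i, ConvexOn ℝ Set.univ (gI i)) (hhI : ∀ i, ConvexOn ℝ Set.univ (hI i))
    (hgE : ∀ j, ConvexOn ℝ Set.univ (gE j)) (hhE : ∀ j, ConvexOn ℝ Set.univ (hE j))
    (xs : Euc d) :
    (Feasible A gI hI gE hE xs → IsCritical A g0 h0 gI hI gE hE xs →
      ∃ c0 : ℝ, 0 < c0 ∧ ∀ c ≥ c0, IsGenCritical A g0 h0 gI hI gE hE c xs) ∧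
    (Feasible A gI hI gE hE xs → (∃ c : ℝ, 0 < c ∧ IsGenCritical A g0 h0 gI hI gE hE c xs) →
      IsCritical A g0 h0 gI hI gE hE xs) := by
  constructor
  · -- criticality implies generalised criticality for large c
    rintro hfeas ⟨V, lam, mu1, mu2, hlam, hmu1, hmu2, hcs, u0, hu0, uI, huI,
      uE, huE, zE, hzE, ν, hν, heq⟩
    obtain ⟨hxsA, hIfeas, hEfeas⟩ := hfeas
    have hlamsum : (0:ℝ) ≤ ∑ i, lam i := Finset.sum_nonneg (fun i _ => hlam i)
    have hmusum : (0:ℝ) ≤ ∑ j, (mu1 j + mu2 j) :=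
      Finset.sum_nonneg (fun k _ => add_nonneg (hmu1 k) (hmu2 k))
    refine ⟨1 + (∑ i, lam i) + ∑ j, (mu1 j + mu2 j), by linarith, fun c hc => ?_⟩
    have hlamc : ∀ i, lam i ≤ c := by
      intro i
      have h1 : lam i ≤ ∑ i, lam i :=
        Finset.single_le_sum (fun i _ => hlam i) (Finset.mem_univ i)
      linarith
    have hmuc : ∀ j, mu1 j + mu2 j ≤ c := by
      intro j
      have h1 : mu1 j + mu2 j ≤ ∑ j, (mu1 j + mu2 j) :=
        Finset.single_le_sum (fun k _ => add_nonneg (hmu1 k) (hmu2 k))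
          (Finset.mem_univ j)
      linarith
    have hcpos : (0:ℝ) < c := by linarith
    refine ⟨hxsA, V, fun z hz => ?_⟩
    set zx : Euc d := z - xs with hzx
    -- Gam at xs is 0
    have hGamxs : Gam gI V xs = 0 := by
      rw [Gam]
      have h1 : ∀ i : Fin l, max (gI i xs - hI i xs - ⟪V.vI i, xs - xs⟫) 0 = 0 := by
        intro i
        simp only [sub_self, inner_zero_right, sub_zero]
        exact max_eq_right (hIfeas i)
      have h2 : ∀ j : Fin p, max (gE j xs - hE j xs - ⟪V.vE j, xs - xs⟫)
          (hE j xs - gE j xs - ⟪V.wE j, xs - xs⟫) = 0 := by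
        intro j
        have := hEfeas j
        simp only [sub_self, inner_zero_right, sub_zero]
        rw [this]
        have : hE j xs - gE j xs = 0 := by linarith
        rw [this]
        simp
      rw [Finset.sum_congr rfl (fun i _ => h1 i), Finset.sum_congr rfl (fun j _ => h2 j)]
      simp
    -- per-index inequalities
    have hSi : ∀ i : Fin l, lam i * (⟪uI i, zx⟫ - ⟪V.vI i, zx⟫)
        ≤ c * max (gI i z - hI i xs - ⟪V.vI i, z - xs⟫) 0 := by
      intro i
      set M := max (gI i z - hI i xs - ⟪V.vI i, z - xs⟫) 0 with hM
      have hM0 : 0 ≤ M := le_max_right _ _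
      have hMa : gI i z - hI i xs - ⟪V.vI i, z - xs⟫ ≤ M := le_max_left _ _
      have hgrad := huI i z
      have hkey : gI i xs - hI i xs + (⟪uI i, zx⟫ - ⟪V.vI i, zx⟫) ≤ M := by
        rw [hzx]
        linarith
      have h1 : lam i * (gI i xs - hI i xs + (⟪uI i, zx⟫ - ⟪V.vI i, zx⟫)) ≤ lam i * M :=
        mul_le_mul_of_nonneg_left hkey (hlam i)
      have h2 : lam i * M ≤ c * M := mul_le_mul_of_nonneg_right (hlamc i) hM0
      have h3 := hcs i
      nlinarith [h1, h2, h3]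
    have hTj : ∀ j : Fin p, mu1 j * (⟪uE j, zx⟫ - ⟪V.vE j, zx⟫)
        + mu2 j * (⟪zE j, zx⟫ - ⟪V.wE j, zx⟫)
        ≤ c * max (gE j z - hE j xs - ⟪V.vE j, z - xs⟫)
            (hE j z - gE j xs - ⟪V.wE j, z - xs⟫) := by
      intro j
      set T := max (gE j z - hE j xs - ⟪V.vE j, z - xs⟫)
        (hE j z - gE j xs - ⟪V.wE j, z - xs⟫) with hT
      have hTa : gE j z - hE j xs - ⟪V.vE j, z - xs⟫ ≤ T := le_max_left _ _
      have hTb : hE j z - gE j xs - ⟪V.wE j, z - xs⟫ ≤ T := le_max_right _ _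
      have hfeq := hEfeas j
      have hgA := huE j z
      have hgB := hzE j z
      have hgC := V.vE_mem j z
      have hgD := V.wE_mem j z
      have hT0 : 0 ≤ T := by linarith
      have hA : ⟪uE j, zx⟫ - ⟪V.vE j, zx⟫ ≤ T := by rw [hzx]; linarith
      have hB : ⟪zE j, zx⟫ - ⟪V.wE j, zx⟫ ≤ T := by rw [hzx]; linarith
      have h1 : mu1 j * (⟪uE j, zx⟫ - ⟪V.vE j, zx⟫) ≤ mu1 j * T :=
        mul_le_mul_of_nonneg_left hA (hmu1 j)
      have h2 : mu2 j * (⟪zE j, zx⟫ - ⟪V.wE j, zx⟫) ≤ mu2 j * T :=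
        mul_le_mul_of_nonneg_left hB (hmu2 j)
      have h3 : (mu1 j + mu2 j) * T ≤ c * T := mul_le_mul_of_nonneg_right (hmuc j) hT0
      nlinarith [h1, h2, h3]
    -- the criticality identity, dotted with zx
    have hdot := congrArg (fun w : Euc d => ⟪w, zx⟫) heq
    simp only [inner_zero_left, inner_add_left, inner_sub_left, sum_inner,
      real_inner_smul_left] at hdot
    -- sum the per-index inequalities
    have hsum1 : ∑ i, lam i * (⟪uI i, zx⟫ - ⟪V.vI i, zx⟫)
        ≤ c * ∑ i, max (gI i z - hI i xs - ⟪V.vI i, z - xs⟫) 0 := by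
      rw [Finset.mul_sum]
      exact Finset.sum_le_sum (fun i _ => hSi i)
    have hsum2 : ∑ j, (mu1 j * (⟪uE j, zx⟫ - ⟪V.vE j, zx⟫)
          + mu2 j * (⟪zE j, zx⟫ - ⟪V.wE j, zx⟫))
        ≤ c * ∑ j, max (gE j z - hE j xs - ⟪V.vE j, z - xs⟫)
            (hE j z - gE j xs - ⟪V.wE j, z - xs⟫) := by
      rw [Finset.mul_sum]
      exact Finset.sum_le_sum (fun j _ => hTj j)
    have hg0 := hu0 z
    have hνz : ⟪ν, zx⟫ ≤ 0 := hν z hz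
    rw [Qfun, Qfun, hGamxs]
    simp only [sub_self, inner_zero_right, sub_zero, mul_zero, add_zero]
    rw [Gam]
    -- align atom shapes
    simp only [mul_sub, Finset.sum_add_distrib, Finset.sum_sub_distrib] at hdot hsum1 hsum2
    rw [mul_add]
    have hv0 : ⟪V.v0, z - xs⟫ = ⟪V.v0, zx⟫ := by rw [hzx]
    have hu0' : ⟪u0, z - xs⟫ = ⟪u0, zx⟫ := by rw [hzx]
    rw [hv0]
    rw [hu0'] at hg0
    linarith [hdot, hsum1, hsum2, hg0, hνz]
  · -- generalised criticality implies criticality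
    rintro hfeas ⟨c, hc, hxsA, V, hmin⟩
    obtain ⟨hxsA', hIfeas, hEfeas⟩ := hfeas
    have hFIconv : ∀ i : Fin l, ConvexOn ℝ Set.univ
        (fun z => max (gI i z - hI i xs - ⟪V.vI i, z - xs⟫) 0) := fun i =>
      (shifted_convex2 (hgI i) (V.vI i) xs (hI i xs)).sup (convexOn_const 0 convex_univ)
    have hFEconv : ∀ j : Fin p, ConvexOn ℝ Set.univ
        (fun z => max (gE j z - hE j xs - ⟪V.vE j, z - xs⟫)
          (hE j z - gE j xs - ⟪V.wE j, z - xs⟫)) := fun j =>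
      (shifted_convex2 (hgE j) (V.vE j) xs (hE j xs)).sup
        (shifted_convex2 (hhE j) (V.wE j) xs (gE j xs))
    have hGamconv : ConvexOn ℝ Set.univ (Gam gI V) :=
      (convexOn_sum hFIconv).add (convexOn_sum hFEconv)
    have hG0conv : ConvexOn ℝ Set.univ (fun z => g0 z - ⟪V.v0, z - xs⟫) := by
      have := shifted_convex hg0 (V.v0) xs 0
      convert this using 2 with z
      ring
    have hQconv : ConvexOn ℝ Set.univ (Qfun g0 gI V c) :=
      hG0conv.add (hGamconv.smul hc.le)
    obtain ⟨U, hU, hUnc⟩ := exists_subdiff_neg_normalCone hQconv hA hxsA hmin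
    obtain ⟨U0, hU0, UG, hUG, hUdec⟩ := subdiff_add hG0conv (hGamconv.smul hc.le) hU
    have hu0 : U0 + V.v0 ∈ subdiff g0 xs := by
      intro y
      have hy := hU0 y
      simp only [sub_self, inner_zero_right] at hy
      rw [inner_add_left]
      linarith
    have hσmem : c⁻¹ • UG ∈ subdiff (Gam gI V) xs := subdiff_smul hc hUG
    set σ : Euc d := c⁻¹ • UG with hσdef
    have hUGσ : UG = c • σ := by rw [hσdef, smul_inv_smul₀ (ne_of_gt hc)]
    obtain ⟨σI, hσI, σE, hσE, hσdec⟩ :=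
      subdiff_add (convexOn_sum hFIconv) (convexOn_sum hFEconv) hσmem
    obtain ⟨sI, hsI, hσIsum⟩ := subdiff_sum hFIconv hσI
    obtain ⟨sE, hsE, hσEsum⟩ := subdiff_sum hFEconv hσE
    have hImax := fun i : Fin l => subdiff_max
      (shifted_convex2 (hgI i) (V.vI i) xs (hI i xs))
      (convexOn_const 0 convex_univ)
      (show gI i xs - hI i xs - ⟪V.vI i, xs - xs⟫ ≤ 0 by
        simp only [sub_self, inner_zero_right, sub_zero]; exact hIfeas i)
      rfl (hsI i)
    choose θI hθI vvI hvvI wwI hwwI heqI hslackI using hImax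
    have hEmax := fun j : Fin p => subdiff_max
      (shifted_convex2 (hgE j) (V.vE j) xs (hE j xs))
      (shifted_convex2 (hhE j) (V.wE j) xs (gE j xs))
      (show gE j xs - hE j xs - ⟪V.vE j, xs - xs⟫ ≤ 0 by
        simp only [sub_self, inner_zero_right, sub_zero]
        exact le_of_eq (hEfeas j))
      (show hE j xs - gE j xs - ⟪V.wE j, xs - xs⟫ = 0 by
        simp only [sub_self, inner_zero_right, sub_zero]
        have := hEfeas j; linarith)
      (hsE j)
    choose θE hθE vvE hvvE wwE hwwE heqE hslackE using hEmax
    have huIm : ∀ i, vvI i + V.vI i ∈ subdiff (gI i) xs := fun i => subdiff_shift2 (hvvI i)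
    have hwwI0 : ∀ i, wwI i = 0 := fun i => subdiff_zero (hwwI i)
    have huEm : ∀ j, vvE j + V.vE j ∈ subdiff (gE j) xs := fun j => subdiff_shift2 (hvvE j)
    have hzEm : ∀ j, wwE j + V.wE j ∈ subdiff (hE j) xs := fun j => subdiff_shift2 (hwwE j)
    refine ⟨V, fun i => c * θI i, fun j => c * θE j, fun j => c * (1 - θE j),
      fun i => mul_nonneg hc.le (hθI i).1, fun j => mul_nonneg hc.le (hθE j).1,
      fun j => mul_nonneg hc.le (by have := (hθE j).2; linarith),
      ?_,
      U0 + V.v0, hu0, fun i => vvI i + V.vI i, huIm,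
      fun j => vvE j + V.vE j, huEm, fun j => wwE j + V.wE j, hzEm,
      -U, hUnc, ?_⟩
    · intro i
      have hsl := hslackI i
      simp only [sub_self, inner_zero_right, sub_zero] at hsl
      rw [mul_assoc, hsl, mul_zero]
    · have e1 : U0 + V.v0 - V.v0 = U0 := add_sub_cancel_right _ _
      have e2 : ∑ i, (c * θI i) • (vvI i + V.vI i - V.vI i) = c • ∑ i, sI i := by
        rw [Finset.smul_sum]
        refine Finset.sum_congr rfl (fun i _ => ?_)
        rw [heqI i, hwwI0 i]
        module
      have e3 : ∑ j, (c * θE j) • (vvE j + V.vE j - V.vE j) = c • ∑ j, θE j • vvE j := by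
        rw [Finset.smul_sum]
        exact Finset.sum_congr rfl (fun j _ => by module)
      have e4 : ∑ j, (c * (1 - θE j)) • (V.wE j - (wwE j + V.wE j))
          = -(c • ∑ j, (1 - θE j) • wwE j) := by
        rw [Finset.smul_sum, ← Finset.sum_neg_distrib]
        exact Finset.sum_congr rfl (fun j _ => by module)
      have e5 : ∑ j, sE j = (∑ j, θE j • vvE j) + ∑ j, (1 - θE j) • wwE j := by
        rw [← Finset.sum_add_distrib]
        exact Finset.sum_congr rfl (fun j _ => heqE j)
      rw [e1, e2, e3, e4, hUdec, hUGσ, hσdec, hσIsum, hσEsum, e5]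
      module
end
end

section
/- If the penalty function Φ_{c_0} is coercive on A for some c_0 > 0, then for every c ≥ c_0, every y ∈ ℝ^d and every subgradient tuple V at y the convex function Q_c(·, y, V) attains a global minimum on the set A. -/
open RealInnerProductSpace Finset Filter Topology

noncomputable section

variable {d l p : ℕ}

/-!
Subgradient inequalities make every linearisation in `Γ(·, y, V)` dominate the corresponding
term of `φ`, and `-⟪v₀, x - y⟫ ≥ h₀(y) - h₀(x)`; hence `Q_c(·, y, V) ≥ Φ_{c₀} + h₀(y)` for
`0 ≤ c₀ ≤ c`, so `Q_c(·, y, V)` is coercive on `A`. Being convex on `ℝ^d`, it is continuous, and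
a continuous function coercive on a nonempty closed set attains its minimum there.
-/

lemma ConvexOn.continuous_of_univ {E : Type*} [NormedAddCommGroup E] [NormedSpace ℝ E]
    [FiniteDimensional ℝ E] {f : E → ℝ} (hf : ConvexOn ℝ Set.univ f) : Continuous f :=
  continuousOn_univ.mp (hf.continuousOn isOpen_univ)

section Coercive

variable {d : ℕ} {F G : Euc d → ℝ} {A : Set (Euc d)}

theorem CoerciveOn.tendsto_cobounded_inf_principal (hF : CoerciveOn F A) :
    Tendsto F (Bornology.cobounded (Euc d) ⊓ 𝓟 A) atTop := by
  refine tendsto_atTop.mpr fun M => ?_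
  by_contra hM
  have hfar : ∀ n : ℕ, ∃ x, ((n : ℝ) ≤ ‖x‖ ∧ x ∈ A) ∧ ¬M ≤ F x := fun n =>
    (hasBasis_cobounded_norm.inf_principal A).frequently_iff.mp (not_eventually.mp hM) n trivial
  choose u hu hFu using hfar
  have hnorm : Tendsto (fun n => ‖u n‖) atTop atTop :=
    tendsto_atTop_mono (fun n => (hu n).1) tendsto_natCast_atTop_atTop
  obtain ⟨n, hn⟩ := ((hF u (fun n => (hu n).2) hnorm).eventually_ge_atTop M).exists
  exact hFu n hn

theorem CoerciveOn.of_le_add (hF : CoerciveOn F A) (b : ℝ) (hFG : ∀ x ∈ A, F x + b ≤ G x) :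
    CoerciveOn G A := fun u huA hu =>
  tendsto_atTop_mono (fun n => hFG (u n) (huA n))
    (tendsto_atTop_add_const_right _ b (hF u huA hu))

theorem CoerciveOn.exists_isMinOn (hF : CoerciveOn F A) (hFc : Continuous F)
    (hAcl : IsClosed A) (hAne : A.Nonempty) : ∃ x ∈ A, IsMinOn F A x := by
  obtain ⟨x₀, hx₀⟩ := hAne
  refine hFc.continuousOn.exists_isMinOn' hAcl hx₀ ?_
  rw [← Metric.cobounded_eq_cocompact]
  exact hF.tendsto_cobounded_inf_principal.eventually_ge_atTop (F x₀)

end Coercive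

lemma inner_le_sub_of_mem_subdiff {d : ℕ} {f : Euc d → ℝ} {v y : Euc d}
    (hv : v ∈ subdiff f y) (x : Euc d) : ⟪v, x - y⟫ ≤ f x - f y := by
  linarith [hv x]

section Linearisation

variable {d l p : ℕ} {g0 h0 : Euc d → ℝ} {gI hI : Fin l → Euc d → ℝ}
  {gE hE : Fin p → Euc d → ℝ} {y : Euc d}

lemma phi_nonneg (x : Euc d) : 0 ≤ phi gI hI gE hE x :=
  add_nonneg (sum_nonneg fun _ _ => le_max_right _ _) (sum_nonneg fun _ _ => abs_nonneg _)

lemma phi_le_Gam (V : SubgradTuple h0 hI gE hE y) (x : Euc d) :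
    phi gI hI gE hE x ≤ Gam gI V x := by
  refine add_le_add (sum_le_sum fun i _ => max_le_max ?_ le_rfl)
    (sum_le_sum fun j _ => abs_eq_max_neg (a := gE j x - hE j x) ▸ max_le_max ?_ ?_)
  · linarith [inner_le_sub_of_mem_subdiff (V.vI_mem i) x]
  · linarith [inner_le_sub_of_mem_subdiff (V.vE_mem j) x]
  · linarith [inner_le_sub_of_mem_subdiff (V.wE_mem j) x]

theorem Phi_add_le_Qfun (V : SubgradTuple h0 hI gE hE y) {c0 c : ℝ} (hc0 : 0 ≤ c0)
    (hc : c0 ≤ c) (x : Euc d) :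
    Phi g0 h0 gI hI gE hE c0 x + h0 y ≤ Qfun g0 gI V c x := by
  have hphi := phi_le_Gam (gI := gI) V x
  have hpen : c0 * phi gI hI gE hE x ≤ c * Gam gI V x :=
    calc c0 * phi gI hI gE hE x ≤ c0 * Gam gI V x := mul_le_mul_of_nonneg_left hphi hc0
      _ ≤ c * Gam gI V x := mul_le_mul_of_nonneg_right hc ((phi_nonneg x).trans hphi)
  have h0_lin := inner_le_sub_of_mem_subdiff V.v0_mem x
  unfold Phi Qfun
  linarith

theorem continuous_Qfun (hg0 : ConvexOn ℝ Set.univ g0)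
    (hgI : ∀ i, ConvexOn ℝ Set.univ (gI i))
    (hgE : ∀ j, ConvexOn ℝ Set.univ (gE j)) (hhE : ∀ j, ConvexOn ℝ Set.univ (hE j))
    (V : SubgradTuple h0 hI gE hE y) (c : ℝ) : Continuous (Qfun g0 gI V c) := by
  have hg0c := hg0.continuous_of_univ
  have hgIc := fun i => (hgI i).continuous_of_univ
  have hgEc := fun j => (hgE j).continuous_of_univ
  have hhEc := fun j => (hhE j).continuous_of_univ
  unfold Qfun Gam
  fun_prop

end Linearisation

theorem stmt4_general {d l p : ℕ} (A : Set (Euc d)) (g0 h0 : Euc d → ℝ)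
    (gI hI : Fin l → Euc d → ℝ) (gE hE : Fin p → Euc d → ℝ)
    (hAcl : IsClosed A) (hAne : A.Nonempty)
    (hg0 : ConvexOn ℝ Set.univ g0)
    (hgI : ∀ i, ConvexOn ℝ Set.univ (gI i))
    (hgE : ∀ j, ConvexOn ℝ Set.univ (gE j)) (hhE : ∀ j, ConvexOn ℝ Set.univ (hE j))
    (c0 : ℝ) (hc0 : 0 < c0) (hcoer : CoerciveOn (Phi g0 h0 gI hI gE hE c0) A)
    (c : ℝ) (hc : c0 ≤ c) (y : Euc d) (V : SubgradTuple h0 hI gE hE y) :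
    ∃ xs ∈ A, ∀ z ∈ A, Qfun g0 gI V c xs ≤ Qfun g0 gI V c z := by
  have hQcoer : CoerciveOn (Qfun g0 gI V c) A :=
    hcoer.of_le_add (h0 y) fun x _ => Phi_add_le_Qfun V hc0.le hc x
  obtain ⟨xs, hxs, hmin⟩ :=
    hQcoer.exists_isMinOn (continuous_Qfun hg0 hgI hgE hhE V c) hAcl hAne
  exact ⟨xs, hxs, isMinOn_iff.mp hmin⟩

theorem stmt4 {d l p : ℕ} (A : Set (Euc d)) (g0 h0 : Euc d → ℝ)
    (gI hI : Fin l → Euc d → ℝ) (gE hE : Fin p → Euc d → ℝ)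
    (hA : Convex ℝ A) (hAcl : IsClosed A) (hAne : A.Nonempty)
    (hg0 : ConvexOn ℝ Set.univ g0) (hh0 : ConvexOn ℝ Set.univ h0)
    (hgI : ∀ i, ConvexOn ℝ Set.univ (gI i)) (hhI : ∀ i, ConvexOn ℝ Set.univ (hI i))
    (hgE : ∀ j, ConvexOn ℝ Set.univ (gE j)) (hhE : ∀ j, ConvexOn ℝ Set.univ (hE j))
    (c0 : ℝ) (hc0 : 0 < c0) (hcoer : CoerciveOn (Phi g0 h0 gI hI gE hE c0) A)
    (c : ℝ) (hc : c0 ≤ c) (y : Euc d) (V : SubgradTuple h0 hI gE hE y) :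
    ∃ xs ∈ A, ∀ z ∈ A, Qfun g0 gI V c xs ≤ Qfun g0 gI V c z :=
  stmt4_general A g0 h0 gI hI gE hE hAcl hAne hg0 hgI hgE hhE c0 hc0 hcoer c hc y V
end
end
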